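/- Fix K ≥ 1. A probability distribution γ on {0,1}×{0,1} can be recovered from σ = BivBin(K,γ) by: γ(1,1) = (Cov_σ(Π1,Π2) + (1/K)·E_σ[Π1]·E_σ[Π2])/K, where Cov_σ(Π1,Π2) = E_σ[Π1·Π2] − E_σ[Π1]·E_σ[Π2]; and γ(1,0) = E_σ[Π1]/K − γ(1,1), γ(0,1) = E_σ[Π2]/K − γ(1,1), γ(0,0) = 1 − γ(1,0) − γ(0,1) − γ(1,1). In particular, two two-coin distributions γ, γ' with BivBin(K,γ) = BivBin(K,γ') are equal. -/

import Mathlib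

open Finset

section aux
variable {ι : Type*} [DecidableEq ι]

private def bbD (x : ι) : ι → ℕ := fun i => if i = x then 1 else 0

private lemma bb_prod_delta (s : Finset ι) (x : ι) (hx : x ∈ s) (γ : ι → ℝ) (k : ι → ℕ) :
    ∏ i ∈ s, γ i ^ (k i + bbD x i) = γ x * ∏ i ∈ s, γ i ^ k i := by
  simp only [pow_add, Finset.prod_mul_distrib]
  have : ∏ i ∈ s, γ i ^ bbD x i = γ x := by
    rw [Finset.prod_eq_single x (fun i _ hi => by simp [bbD, hi]) (fun h => absurd hx h)]
    simp [bbD]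
  rw [this]; ring

private lemma bb_mult_succ (s : Finset ι) (x : ι) (hx : x ∈ s) (k : ι → ℕ) :
    (k x + 1) * Nat.multinomial s (fun i => k i + bbD x i) =
      (∑ i ∈ s, k i + 1) * Nat.multinomial s k := by
  have h1 := Nat.multinomial_spec s k
  have h2 := Nat.multinomial_spec s (fun i => k i + bbD x i)
  have hs : ∑ i ∈ s, (k i + bbD x i) = ∑ i ∈ s, k i + 1 := by
    rw [Finset.sum_add_distrib]
    congr 1
    simp [bbD, Finset.sum_ite_eq', hx]
  have hp : ∏ i ∈ s, (k i + bbD x i).factorial = (k x + 1) * ∏ i ∈ s, (k i).factorial := by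
    rw [← Finset.mul_prod_erase s _ hx, ← Finset.mul_prod_erase s (fun i => (k i).factorial) hx]
    have : ∏ i ∈ s.erase x, (k i + bbD x i).factorial = ∏ i ∈ s.erase x, (k i).factorial := by
      refine Finset.prod_congr rfl fun i hi => ?_
      simp [bbD, Finset.ne_of_mem_erase hi]
    rw [this, bbD]
    simp [Nat.factorial_succ, mul_assoc]
  rw [hs, hp] at h2
  have hpos : 0 < ∏ i ∈ s, (k i).factorial := Finset.prod_pos fun i _ => Nat.factorial_pos _
  have key : (∏ i ∈ s, (k i).factorial) * ((k x + 1) * Nat.multinomial s (fun i => k i + bbD x i))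
      = (∏ i ∈ s, (k i).factorial) * ((∑ i ∈ s, k i + 1) * Nat.multinomial s k) := by
    calc (∏ i ∈ s, (k i).factorial) * ((k x + 1) * Nat.multinomial s (fun i => k i + bbD x i))
        = ((k x + 1) * ∏ i ∈ s, (k i).factorial) * Nat.multinomial s (fun i => k i + bbD x i) := by ring
      _ = (∑ i ∈ s, k i + 1).factorial := h2
      _ = (∑ i ∈ s, k i + 1) * (∑ i ∈ s, k i).factorial := by rw [Nat.factorial_succ]
      _ = (∑ i ∈ s, k i + 1) * ((∏ i ∈ s, (k i).factorial) * Nat.multinomial s k) := by rw [h1]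
      _ = (∏ i ∈ s, (k i).factorial) * ((∑ i ∈ s, k i + 1) * Nat.multinomial s k) := by ring
  exact Nat.eq_of_mul_eq_mul_left hpos key

private lemma bb_shift (s : Finset ι) (x : ι) (hx : x ∈ s) (γ : ι → ℝ) (n : ℕ)
    (g : (ι → ℕ) → ℝ) :
    ∑ k ∈ Finset.piAntidiag s (n+1),
        (Nat.multinomial s k : ℝ) * (∏ i ∈ s, γ i ^ k i) * g k * (k x : ℝ)
      = (n+1 : ℝ) * γ x * ∑ k ∈ Finset.piAntidiag s n,
          (Nat.multinomial s k : ℝ) * (∏ i ∈ s, γ i ^ k i) * g (fun i => k i + bbD x i) := by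
  rw [Finset.mul_sum]
  rw [← Finset.sum_filter_of_ne (p := fun k => k x ≠ 0)
    (fun k _ h => by intro h0; exact h (by simp [h0]))]
  refine (Finset.sum_bij' (fun k _ => fun i => k i + bbD x i) (fun k _ => fun i => k i - bbD x i)
    ?_ ?_ ?_ ?_ ?_).symm
  · -- addition maps piAntidiag s n into the filter
    rintro k hk
    simp only [Finset.mem_piAntidiag] at hk
    obtain ⟨hksum, hksupp⟩ := hk
    simp only [Finset.mem_filter, Finset.mem_piAntidiag]
    refine ⟨⟨?_, ?_⟩, ?_⟩
    · rw [Finset.sum_add_distrib, hksum]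
      congr 1
      simp [bbD, Finset.sum_ite_eq', hx]
    · intro i hi
      by_cases hix : i = x
      · subst hix; exact hx
      · exact hksupp i (by simpa [bbD, hix] using hi)
    · simp [bbD]
  · -- subtraction maps the filter into piAntidiag s n
    rintro k hk
    simp only [Finset.mem_filter, Finset.mem_piAntidiag] at hk
    obtain ⟨⟨hksum, hksupp⟩, hxne⟩ := hk
    simp only [Finset.mem_piAntidiag]
    constructor
    · have he : ∑ i ∈ s.erase x, (k i - bbD x i) = ∑ i ∈ s.erase x, k i := by
        refine Finset.sum_congr rfl fun i hi => ?_
        simp [bbD, Finset.ne_of_mem_erase hi]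
      have hxle : 1 ≤ k x := Nat.one_le_iff_ne_zero.mpr hxne
      rw [← Finset.sum_erase_add s _ hx, he]
      rw [← Finset.sum_erase_add s k hx] at hksum
      have hdx : bbD x x = 1 := by simp [bbD]
      rw [hdx]
      omega
    · intro i hi
      refine hksupp i ?_
      intro h0; apply hi; simp [h0]
  · -- left inverse
    rintro k _
    funext i
    simp [bbD]
  · -- right inverse
    rintro k hk
    simp only [Finset.mem_filter] at hk
    have hxne := hk.2
    funext j
    simp only [bbD]
    by_cases hjx : j = x
    · subst hjx; split_ifs <;> omega
    · simp [hjx]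
  · -- term equality
    rintro k hk
    simp only [Finset.mem_piAntidiag] at hk
    obtain ⟨hksum, _⟩ := hk
    have hm := bb_mult_succ s x hx k
    rw [hksum] at hm
    have hmr : ((k x : ℝ) + 1) * (Nat.multinomial s (fun i => k i + bbD x i) : ℝ)
        = ((n : ℝ) + 1) * (Nat.multinomial s k : ℝ) := by
      exact_mod_cast congrArg (Nat.cast (R := ℝ)) hm
    have hprod := bb_prod_delta s x hx γ k
    have hkx : k x + bbD x x = k x + 1 := by simp [bbD]
    show (n+1 : ℝ) * γ x * ((Nat.multinomial s k : ℝ) * (∏ i ∈ s, γ i ^ k i)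
        * g (fun i => k i + bbD x i))
      = (Nat.multinomial s (fun i => k i + bbD x i) : ℝ)
        * (∏ i ∈ s, γ i ^ (k i + bbD x i)) * g (fun i => k i + bbD x i)
        * ((k x + bbD x x : ℕ) : ℝ)
    rw [hkx, hprod]
    push_cast
    calc ((n:ℝ)+1) * γ x * ((Nat.multinomial s k : ℝ) * (∏ i ∈ s, γ i ^ k i)
          * g (fun i => k i + bbD x i))
        = (((n : ℝ) + 1) * (Nat.multinomial s k : ℝ)) * (∏ i ∈ s, γ i ^ k i)
          * g (fun i => k i + bbD x i) * γ x := by ring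
      _ = (((k x : ℝ) + 1) * (Nat.multinomial s (fun i => k i + bbD x i) : ℝ))
          * (∏ i ∈ s, γ i ^ k i) * g (fun i => k i + bbD x i) * γ x := by rw [hmr]
      _ = (Nat.multinomial s (fun i => k i + bbD x i) : ℝ)
          * (γ x * ∏ i ∈ s, γ i ^ k i) * g (fun i => k i + bbD x i) * ((k x : ℝ) + 1) := by ring

private lemma bb_L0 (s : Finset ι) (γ : ι → ℝ) (hsum : ∑ i ∈ s, γ i = 1) (n : ℕ) :
    ∑ k ∈ Finset.piAntidiag s n, (Nat.multinomial s k : ℝ) * (∏ i ∈ s, γ i ^ k i) = 1 := by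
  have h := Finset.sum_pow_eq_sum_piAntidiag s γ n
  rw [hsum, one_pow] at h
  exact h.symm

private lemma bb_L1 (s : Finset ι) (γ : ι → ℝ) (hsum : ∑ i ∈ s, γ i = 1)
    (x : ι) (hx : x ∈ s) (n : ℕ) :
    ∑ k ∈ Finset.piAntidiag s n,
        (Nat.multinomial s k : ℝ) * (∏ i ∈ s, γ i ^ k i) * (k x : ℝ) = (n : ℝ) * γ x := by
  induction n with
  | zero => simp [Finset.piAntidiag_zero]
  | succ n ih =>
    have h := bb_shift s x hx γ n (fun _ => (1 : ℝ))
    simp only [mul_one] at h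
    rw [h, bb_L0 s γ hsum n]
    push_cast
    ring

private lemma bb_L2 (s : Finset ι) (γ : ι → ℝ) (hsum : ∑ i ∈ s, γ i = 1)
    (x : ι) (hx : x ∈ s) (y : ι) (hy : y ∈ s) (n : ℕ) :
    ∑ k ∈ Finset.piAntidiag s n,
        (Nat.multinomial s k : ℝ) * (∏ i ∈ s, γ i ^ k i) * (k y : ℝ) * (k x : ℝ)
      = (n : ℝ) * ((n : ℝ) - 1) * γ x * γ y + (if y = x then (n : ℝ) * γ x else 0) := by
  induction n with
  | zero => simp [Finset.piAntidiag_zero]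
  | succ n ih =>
    have h := bb_shift s x hx γ n (fun k => (k y : ℝ))
    rw [h]
    have hrw : ∀ k ∈ Finset.piAntidiag s n,
        (Nat.multinomial s k : ℝ) * (∏ i ∈ s, γ i ^ k i) * ((k y + bbD x y : ℕ) : ℝ)
        = (Nat.multinomial s k : ℝ) * (∏ i ∈ s, γ i ^ k i) * (k y : ℝ)
          + (if y = x then 1 else 0) * ((Nat.multinomial s k : ℝ) * (∏ i ∈ s, γ i ^ k i)) := by
      intro k _
      simp only [bbD]
      split_ifs <;> push_cast <;> ring
    rw [Finset.sum_congr rfl hrw, Finset.sum_add_distrib, ← Finset.mul_sum,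
      bb_L1 s γ hsum y hy n, bb_L0 s γ hsum n]
    push_cast
    split_ifs <;> ring

end aux

/-- the marginal heads map on size-K multisets over {0,1} × {0,1} -/
def heads {K : ℕ} (φ : Sym (Fin 2 × Fin 2) K) : ℕ × ℕ :=
  (Multiset.count (1,0) (φ : Multiset (Fin 2 × Fin 2)) +
     Multiset.count (1,1) (φ : Multiset (Fin 2 × Fin 2)),
   Multiset.count (0,1) (φ : Multiset (Fin 2 × Fin 2)) +
     Multiset.count (1,1) (φ : Multiset (Fin 2 × Fin 2)))

/-- the multinomial distribution on size-K multisets over {0,1} × {0,1} -/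
noncomputable def mnl (γ : Fin 2 × Fin 2 → ℝ) {K : ℕ} (φ : Sym (Fin 2 × Fin 2) K) : ℝ :=
  ((K.factorial /
      ∏ x : Fin 2 × Fin 2, (Multiset.count x (φ : Multiset (Fin 2 × Fin 2))).factorial : ℕ) : ℝ) *
    ∏ x : Fin 2 × Fin 2, γ x ^ Multiset.count x (φ : Multiset (Fin 2 × Fin 2))

/-- the bivariate binomial distribution: pushforward of the multinomial along `heads` -/
noncomputable def bivBin (K : ℕ) (γ : Fin 2 × Fin 2 → ℝ) (n : ℕ × ℕ) : ℝ :=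
  ∑ φ ∈ Finset.univ.filter (fun φ : Sym (Fin 2 × Fin 2) K => heads φ = n), mnl γ φ

private lemma bb_count_add_le {α : Type*} [DecidableEq α] (a b : α) (hab : a ≠ b)
    (m : Multiset α) : m.count a + m.count b ≤ Multiset.card m := by
  induction m using Multiset.induction_on with
  | empty => simp
  | cons c t ih =>
    simp only [Multiset.count_cons, Multiset.card_cons]
    split_ifs with h1 h2
    · exact absurd (h1.trans h2.symm) hab
    · omega
    · omega
    · omega
private lemma bb_push (K : ℕ) (γ : Fin 2 × Fin 2 → ℝ) (h : ℕ → ℕ → ℝ) :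
    ∑ n1 ∈ Finset.range (K+1), ∑ n2 ∈ Finset.range (K+1), bivBin K γ (n1, n2) * h n1 n2
      = ∑ φ : Sym (Fin 2 × Fin 2) K, mnl γ φ * h (heads φ).1 (heads φ).2 := by
  rw [← Finset.sum_product']
  have hmaps : ∀ φ ∈ (Finset.univ : Finset (Sym (Fin 2 × Fin 2) K)),
      heads φ ∈ Finset.range (K+1) ×ˢ Finset.range (K+1) := by
    intro φ _
    have hc : Multiset.card (φ : Multiset (Fin 2 × Fin 2)) = K := Sym.card_coe
    have h1 : (heads φ).1 ≤ K := by
      have := bb_count_add_le ((1 : Fin 2), (0 : Fin 2)) (1, 1) (by decide)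
        (φ : Multiset (Fin 2 × Fin 2))
      rw [hc] at this
      simpa [heads] using this
    have h2 : (heads φ).2 ≤ K := by
      have := bb_count_add_le ((0 : Fin 2), (1 : Fin 2)) (1, 1) (by decide)
        (φ : Multiset (Fin 2 × Fin 2))
      rw [hc] at this
      simpa [heads] using this
    simp only [Finset.mem_product, Finset.mem_range]
    omega
  rw [← Finset.sum_fiberwise_of_maps_to hmaps
    (fun φ => mnl γ φ * h (heads φ).1 (heads φ).2)]
  refine Finset.sum_congr rfl fun p hp => ?_
  rw [bivBin, Finset.sum_mul]
  refine Finset.sum_congr rfl fun φ hφ => ?_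
  have hh : heads φ = p := (Finset.mem_filter.mp hφ).2
  rw [hh]
private lemma bb_transfer (K : ℕ) (γ : Fin 2 × Fin 2 → ℝ) (G : (Fin 2 × Fin 2 → ℕ) → ℝ) :
    ∑ φ : Sym (Fin 2 × Fin 2) K, mnl γ φ * G (fun a => Multiset.count a (φ : Multiset (Fin 2 × Fin 2)))
      = ∑ k ∈ Finset.piAntidiag (Finset.univ : Finset (Fin 2 × Fin 2)) K,
          (Nat.multinomial Finset.univ k : ℝ) * (∏ i, γ i ^ k i) * G k := by
  rw [← Finset.map_sym_eq_piAntidiag, Finset.sum_map]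
  have huniv : (Finset.univ : Finset (Fin 2 × Fin 2)).sym K
      = (Finset.univ : Finset (Sym (Fin 2 × Fin 2) K)) := by
    ext m
    simp [Finset.mem_sym_iff]
  rw [huniv]
  refine Finset.sum_congr rfl fun φ _ => ?_
  simp only [Function.Embedding.coeFn_mk, Sym.val_eq_coe]
  have hcnt : ∑ a : Fin 2 × Fin 2, Multiset.count a (φ : Multiset (Fin 2 × Fin 2)) = K := by
    rw [Multiset.sum_count_eq_card (fun a _ => Finset.mem_univ a)]
    exact Sym.card_coe
  have hco : Nat.multinomial (Finset.univ : Finset (Fin 2 × Fin 2))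
        (fun a => Multiset.count a (φ : Multiset (Fin 2 × Fin 2)))
      = K.factorial / ∏ a : Fin 2 × Fin 2, (Multiset.count a (φ : Multiset (Fin 2 × Fin 2))).factorial := by
    rw [Nat.multinomial, hcnt]
  rw [mnl, hco]

private lemma bb_moments (K : ℕ) (γ : Fin 2 × Fin 2 → ℝ)
    (hsum : ∑ x : Fin 2 × Fin 2, γ x = 1) :
    (∑ n1 ∈ Finset.range (K+1), ∑ n2 ∈ Finset.range (K+1), bivBin K γ (n1, n2) * (n1 : ℝ))
        = K * (γ (1,0) + γ (1,1)) ∧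
    (∑ n1 ∈ Finset.range (K+1), ∑ n2 ∈ Finset.range (K+1), bivBin K γ (n1, n2) * (n2 : ℝ))
        = K * (γ (0,1) + γ (1,1)) ∧
    (∑ n1 ∈ Finset.range (K+1), ∑ n2 ∈ Finset.range (K+1),
        bivBin K γ (n1, n2) * (n1 : ℝ) * (n2 : ℝ))
      = (K : ℝ) * ((K : ℝ) - 1) * (γ (1,0) + γ (1,1)) * (γ (0,1) + γ (1,1)) + K * γ (1,1) := by
  have hm := fun x => Finset.mem_univ (α := Fin 2 × Fin 2) x
  refine ⟨?_, ?_, ?_⟩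
  · rw [bb_push K γ (fun a b => (a : ℝ))]
    have hG : ∀ φ : Sym (Fin 2 × Fin 2) K,
        mnl γ φ * ((heads φ).1 : ℝ)
          = mnl γ φ * ((fun k : Fin 2 × Fin 2 → ℕ => ((k (1,0) + k (1,1) : ℕ) : ℝ))
              (fun a => Multiset.count a (φ : Multiset (Fin 2 × Fin 2)))) :=
      fun φ => rfl
    rw [Finset.sum_congr rfl (fun φ _ => hG φ),
      bb_transfer K γ (fun k => ((k (1,0) + k (1,1) : ℕ) : ℝ))]
    have hexp : ∀ k ∈ Finset.piAntidiag (Finset.univ : Finset (Fin 2 × Fin 2)) K,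
        (Nat.multinomial Finset.univ k : ℝ) * (∏ i, γ i ^ k i) * ((k (1,0) + k (1,1) : ℕ) : ℝ)
        = (Nat.multinomial Finset.univ k : ℝ) * (∏ i, γ i ^ k i) * (k (1,0) : ℝ)
          + (Nat.multinomial Finset.univ k : ℝ) * (∏ i, γ i ^ k i) * (k (1,1) : ℝ) := by
      intro k _
      push_cast
      ring
    rw [Finset.sum_congr rfl hexp, Finset.sum_add_distrib,
      bb_L1 Finset.univ γ hsum (1,0) (hm _) K, bb_L1 Finset.univ γ hsum (1,1) (hm _) K]
    ring
  · rw [bb_push K γ (fun a b => (b : ℝ))]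
    have hG : ∀ φ : Sym (Fin 2 × Fin 2) K,
        mnl γ φ * ((heads φ).2 : ℝ)
          = mnl γ φ * ((fun k : Fin 2 × Fin 2 → ℕ => ((k (0,1) + k (1,1) : ℕ) : ℝ))
              (fun a => Multiset.count a (φ : Multiset (Fin 2 × Fin 2)))) :=
      fun φ => rfl
    rw [Finset.sum_congr rfl (fun φ _ => hG φ),
      bb_transfer K γ (fun k => ((k (0,1) + k (1,1) : ℕ) : ℝ))]
    have hexp : ∀ k ∈ Finset.piAntidiag (Finset.univ : Finset (Fin 2 × Fin 2)) K,
        (Nat.multinomial Finset.univ k : ℝ) * (∏ i, γ i ^ k i) * ((k (0,1) + k (1,1) : ℕ) : ℝ)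
        = (Nat.multinomial Finset.univ k : ℝ) * (∏ i, γ i ^ k i) * (k (0,1) : ℝ)
          + (Nat.multinomial Finset.univ k : ℝ) * (∏ i, γ i ^ k i) * (k (1,1) : ℝ) := by
      intro k _
      push_cast
      ring
    rw [Finset.sum_congr rfl hexp, Finset.sum_add_distrib,
      bb_L1 Finset.univ γ hsum (0,1) (hm _) K, bb_L1 Finset.univ γ hsum (1,1) (hm _) K]
    ring
  · have hassoc : ∀ n1 n2 : ℕ, bivBin K γ (n1, n2) * (n1 : ℝ) * (n2 : ℝ)
        = bivBin K γ (n1, n2) * ((n1 : ℝ) * (n2 : ℝ)) := fun _ _ => by ring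
    simp only [hassoc]
    rw [bb_push K γ (fun a b => (a : ℝ) * (b : ℝ))]
    have hG : ∀ φ : Sym (Fin 2 × Fin 2) K,
        mnl γ φ * (((heads φ).1 : ℝ) * ((heads φ).2 : ℝ))
          = mnl γ φ * ((fun k : Fin 2 × Fin 2 → ℕ =>
              ((k (1,0) + k (1,1) : ℕ) : ℝ) * ((k (0,1) + k (1,1) : ℕ) : ℝ))
              (fun a => Multiset.count a (φ : Multiset (Fin 2 × Fin 2)))) :=
      fun φ => rfl
    rw [Finset.sum_congr rfl (fun φ _ => hG φ),
      bb_transfer K γ (fun k => ((k (1,0) + k (1,1) : ℕ) : ℝ) * ((k (0,1) + k (1,1) : ℕ) : ℝ))]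
    have hexp : ∀ k ∈ Finset.piAntidiag (Finset.univ : Finset (Fin 2 × Fin 2)) K,
        (Nat.multinomial Finset.univ k : ℝ) * (∏ i, γ i ^ k i)
            * (((k (1,0) + k (1,1) : ℕ) : ℝ) * ((k (0,1) + k (1,1) : ℕ) : ℝ))
        = (Nat.multinomial Finset.univ k : ℝ) * (∏ i, γ i ^ k i) * (k (1,0) : ℝ) * (k (0,1) : ℝ)
          + (Nat.multinomial Finset.univ k : ℝ) * (∏ i, γ i ^ k i) * (k (1,0) : ℝ) * (k (1,1) : ℝ)
          + (Nat.multinomial Finset.univ k : ℝ) * (∏ i, γ i ^ k i) * (k (1,1) : ℝ) * (k (0,1) : ℝ)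
          + (Nat.multinomial Finset.univ k : ℝ) * (∏ i, γ i ^ k i) * (k (1,1) : ℝ) * (k (1,1) : ℝ) := by
      intro k _
      push_cast
      ring
    rw [Finset.sum_congr rfl hexp, Finset.sum_add_distrib, Finset.sum_add_distrib,
      Finset.sum_add_distrib,
      bb_L2 Finset.univ γ hsum (0,1) (hm _) (1,0) (hm _) K,
      bb_L2 Finset.univ γ hsum (1,1) (hm _) (1,0) (hm _) K,
      bb_L2 Finset.univ γ hsum (0,1) (hm _) (1,1) (hm _) K,
      bb_L2 Finset.univ γ hsum (1,1) (hm _) (1,1) (hm _) K]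
    have d1 : ((1,0) : Fin 2 × Fin 2) ≠ (0,1) := by decide
    have d2 : ((1,0) : Fin 2 × Fin 2) ≠ (1,1) := by decide
    have d3 : ((1,1) : Fin 2 × Fin 2) ≠ (0,1) := by decide
    rw [if_neg d1, if_neg d2, if_neg d3, if_pos rfl]
    ring

theorem bivBin_recover (K : ℕ) (hK : 1 ≤ K) (γ : Fin 2 × Fin 2 → ℝ) (hγ : ∀ x, 0 ≤ γ x)
    (hsum : ∑ x : Fin 2 × Fin 2, γ x = 1) :
    let σ := bivBin K γ
    let E1 := ∑ n1 ∈ Finset.range (K + 1), ∑ n2 ∈ Finset.range (K + 1), σ (n1, n2) * (n1 : ℝ)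
    let E2 := ∑ n1 ∈ Finset.range (K + 1), ∑ n2 ∈ Finset.range (K + 1), σ (n1, n2) * (n2 : ℝ)
    let E12 := ∑ n1 ∈ Finset.range (K + 1), ∑ n2 ∈ Finset.range (K + 1),
      σ (n1, n2) * (n1 : ℝ) * (n2 : ℝ)
    γ (1,1) = ((E12 - E1 * E2) + (1 / K) * E1 * E2) / K ∧
    γ (1,0) = E1 / K - γ (1,1) ∧
    γ (0,1) = E2 / K - γ (1,1) ∧
    γ (0,0) = 1 - γ (1,0) - γ (0,1) - γ (1,1) ∧
    (∀ γ' : Fin 2 × Fin 2 → ℝ, (∀ x, 0 ≤ γ' x) → (∑ x : Fin 2 × Fin 2, γ' x = 1) →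
      bivBin K γ' = bivBin K γ → γ' = γ) := by
  intro σ E1 E2 E12
  have hK0 : (K : ℝ) ≠ 0 := Nat.cast_ne_zero.mpr (by omega)
  obtain ⟨hE1, hE2, hE12⟩ := bb_moments K γ hsum
  have h1 : E1 = (K : ℝ) * (γ (1,0) + γ (1,1)) := hE1
  have h2 : E2 = (K : ℝ) * (γ (0,1) + γ (1,1)) := hE2
  have h12 : E12 = (K : ℝ) * ((K : ℝ) - 1) * (γ (1,0) + γ (1,1)) * (γ (0,1) + γ (1,1))
      + K * γ (1,1) := hE12
  have hs : γ (0,0) + γ (0,1) + (γ (1,0) + γ (1,1)) = 1 := by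
    have := hsum
    simpa [Fintype.sum_prod_type, Fin.sum_univ_two] using this
  refine ⟨?_, ?_, ?_, ?_, ?_⟩
  · rw [h1, h2, h12]
    field_simp
    ring
  · rw [h1]
    field_simp
    ring
  · rw [h2]
    field_simp
    ring
  · linarith
  · intro γ' hγ' hsum' hbb
    obtain ⟨h1', h2', h12'⟩ := bb_moments K γ' hsum'
    rw [hbb] at h1' h2' h12'
    have e1 : (K : ℝ) * (γ' (1,0) + γ' (1,1)) = (K : ℝ) * (γ (1,0) + γ (1,1)) :=
      h1'.symm.trans hE1
    have e2 : (K : ℝ) * (γ' (0,1) + γ' (1,1)) = (K : ℝ) * (γ (0,1) + γ (1,1)) :=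
      h2'.symm.trans hE2
    have e12 := h12'.symm.trans hE12
    have p1 : γ' (1,0) + γ' (1,1) = γ (1,0) + γ (1,1) := mul_left_cancel₀ hK0 e1
    have p2 : γ' (0,1) + γ' (1,1) = γ (0,1) + γ (1,1) := mul_left_cancel₀ hK0 e2
    have p11 : γ' (1,1) = γ (1,1) := by
      rw [p1, p2] at e12
      have hK11 : (K : ℝ) * γ' (1,1) = (K : ℝ) * γ (1,1) := by linarith
      exact mul_left_cancel₀ hK0 hK11
    have p10 : γ' (1,0) = γ (1,0) := by linarith
    have p01 : γ' (0,1) = γ (0,1) := by linarith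
    have hs' : γ' (0,0) + γ' (0,1) + (γ' (1,0) + γ' (1,1)) = 1 := by
      have := hsum'
      simpa [Fintype.sum_prod_type, Fin.sum_univ_two] using this
    have p00 : γ' (0,0) = γ (0,0) := by linarith
    funext x
    obtain ⟨i, j⟩ := x
    fin_cases i <;> fin_cases j
    exacts [p00, p01, p10, p11]
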